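/- Let 1 ≤ k ≤ n − 1. The generalized Reed–Solomon code C_k(A, v) is LCD if and only if for all nonzero polynomials f(X), g(X) ∈ K[X] with deg f < k and deg g < n − k, the polynomial H(X)f(X) − g(X) does not lie in the ideal generated by L(X), i.e. L(X) does not divide H(X)f(X) − g(X). -/

import Mathlib

/-- `L(X) = ∏ i (X - a i)`. -/
noncomputable def Lpoly {K : Type*} [Field K] {n : ℕ} (a : Fin n → K) : Polynomial K :=
  ∏ i, (Polynomial.X - Polynomial.C (a i))

/-- `L_{a_i}(X) = L(X)/(X - a i) = ∏_{j ≠ i} (X - a j)`. -/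
noncomputable def Lipoly {K : Type*} [Field K] {n : ℕ} (a : Fin n → K) (i : Fin n) : Polynomial K :=
  ∏ j ∈ Finset.univ.erase i, (Polynomial.X - Polynomial.C (a j))

/-- `H(X) = ∑ i, v_i² L_{a_i}(X)`. -/
noncomputable def Hpoly {K : Type*} [Field K] {n : ℕ} (a v : Fin n → K) : Polynomial K :=
  ∑ i, Polynomial.C (v i ^ 2) * Lipoly a i

/-- The generalized Reed–Solomon code `C_k(A, v) = {(v_i f(a_i))_i : deg f < k}`. -/
noncomputable def grsFin {K : Type*} [Field K] {n : ℕ} (a v : Fin n → K) (k : ℕ) :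
    Submodule K (Fin n → K) :=
  Submodule.map (LinearMap.pi fun i => v i • (Polynomial.aeval (a i)).toLinearMap)
    (Polynomial.degreeLT K k)

/-- The dual code `C^⊥` with respect to the standard dot product. -/
def dualCode {K : Type*} [Field K] {ι : Type*} [Fintype ι] (C : Submodule K (ι → K)) :
    Submodule K (ι → K) where
  carrier := {w | ∀ c ∈ C, ∑ i, w i * c i = 0}
  zero_mem' := by simp
  add_mem' := fun {w w'} hw hw' c hc => by
    simp only [Pi.add_apply, add_mul, Finset.sum_add_distrib, hw c hc, hw' c hc, add_zero]
  smul_mem' := fun r w hw c hc => by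
    simp only [Pi.smul_apply, smul_eq_mul, mul_assoc, ← Finset.mul_sum, hw c hc, mul_zero]

/-- A linear code is LCD if it meets its dual trivially. -/
def IsLCD {K : Type*} [Field K] {ι : Type*} [Fintype ι] (C : Submodule K (ι → K)) : Prop :=
  C ⊓ dualCode C = ⊥

section GRSAux
open Polynomial Finset
variable {K : Type*} [Field K] {n : ℕ}

lemma Lpoly_monic (a : Fin n → K) : (Lpoly a).Monic :=
  monic_prod_of_monic _ _ fun i _ => monic_X_sub_C (a i)

lemma Lpoly_degree (a : Fin n → K) : (Lpoly a).degree = (n : WithBot ℕ) := by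
  rw [Lpoly, degree_prod]
  simp

lemma Lpoly_eval (a : Fin n → K) (i : Fin n) : (Lpoly a).eval (a i) = 0 := by
  rw [Lpoly, eval_prod]
  exact Finset.prod_eq_zero (mem_univ i) (by simp)

lemma Lip_eval_self_ne (a : Fin n → K) (ha : Function.Injective a) (i : Fin n) :
    (Lipoly a i).eval (a i) ≠ 0 := by
  rw [Lipoly, eval_prod]
  refine Finset.prod_ne_zero_iff.2 fun j hj => ?_
  have : a i ≠ a j := fun h => (Finset.mem_erase.mp hj).1.symm (ha h)
  simp [sub_eq_zero, this]

lemma Lip_eval_other (a : Fin n → K) {i j : Fin n} (hij : i ≠ j) :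
    (Lipoly a j).eval (a i) = 0 := by
  rw [Lipoly, eval_prod]
  exact Finset.prod_eq_zero (Finset.mem_erase.2 ⟨hij, mem_univ i⟩) (by simp)

lemma Hpoly_eval (a v : Fin n → K) (i : Fin n) :
    (Hpoly a v).eval (a i) = v i ^ 2 * (Lipoly a i).eval (a i) := by
  rw [Hpoly, eval_finset_sum]
  rw [Finset.sum_eq_single i (fun j _ hj => by simp [Lip_eval_other a (fun h : i = j => hj h.symm)])
    (fun h => absurd (mem_univ i) h)]
  simp

lemma residue_lemma (a : Fin n → K) (ha : Function.Injective a)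
    (P : Polynomial K) (hP : P.degree < (n : WithBot ℕ)) :
    ∑ i, P.eval (a i) * ((Lipoly a i).eval (a i))⁻¹ = P.coeff (n - 1) := by
  have hinj : Set.InjOn a (Finset.univ : Finset (Fin n)) := fun x _ y _ h => ha h
  have hcard : (Finset.univ : Finset (Fin n)).card = n := by simp
  have hP' : P.degree < ((Finset.univ : Finset (Fin n)).card : WithBot ℕ) := by rwa [hcard]
  have hPI := Lagrange.eq_interpolate hinj hP'
  conv_rhs => rw [hPI]
  rw [Lagrange.interpolate_apply, Polynomial.finset_sum_coeff]
  refine Finset.sum_congr rfl fun i _ => ?_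
  have hdeg : (Lagrange.basis Finset.univ a i).natDegree = n - 1 := by
    rw [Lagrange.natDegree_basis hinj (mem_univ i), hcard]
  rw [Polynomial.coeff_C_mul, ← hdeg, Polynomial.coeff_natDegree]
  congr 1
  have : (Lagrange.basis Finset.univ a i).leadingCoeff
      = ∏ j ∈ Finset.univ.erase i, (a i - a j)⁻¹ := by
    rw [Lagrange.basis, Polynomial.leadingCoeff_prod]
    refine Finset.prod_congr rfl fun j hj => ?_
    have hne : a i ≠ a j := fun h => (Finset.mem_erase.mp hj).1.symm (ha h)
    rw [Lagrange.basisDivisor, Polynomial.leadingCoeff_mul, Polynomial.leadingCoeff_C,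
      Polynomial.leadingCoeff_X_sub_C, mul_one]
  rw [this, Lipoly, Polynomial.eval_prod, ← Finset.prod_inv_distrib]
  simp

lemma eq_zero_of_evals (a : Fin n → K) (ha : Function.Injective a)
    {f : Polynomial K} (hf : f.degree < (n : WithBot ℕ)) (h : ∀ i, f.eval (a i) = 0) :
    f = 0 := by
  have hinj : Set.InjOn a (Finset.univ : Finset (Fin n)) := fun x _ y _ h => ha h
  have hcard : (Finset.univ : Finset (Fin n)).card = n := by simp
  exact eq_zero_of_degree_lt_of_eval_index_eq_zero _ hinj (by rw [hcard]; exact hf)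
    fun i _ => h i

lemma mem_grsFin {a v : Fin n → K} {k : ℕ} {x : Fin n → K} :
    x ∈ grsFin a v k ↔
      ∃ f : Polynomial K, f.degree < (k : WithBot ℕ) ∧ ∀ i, x i = v i * f.eval (a i) := by
  constructor
  · rintro ⟨f, hf, rfl⟩
    exact ⟨f, Polynomial.mem_degreeLT.1 hf, fun i => by
      simp [LinearMap.pi_apply, Polynomial.coe_aeval_eq_eval]⟩
  · rintro ⟨f, hf, hx⟩
    refine ⟨f, Polynomial.mem_degreeLT.2 hf, ?_⟩
    funext i
    simp [LinearMap.pi_apply, Polynomial.coe_aeval_eq_eval, hx i]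

lemma deg_le_of_lt {p : Polynomial K} {m : ℕ} (h : p.degree < (m : WithBot ℕ)) (hm : 1 ≤ m) :
    p.degree ≤ ((m - 1 : ℕ) : WithBot ℕ) := by
  rcases eq_or_ne p 0 with rfl | hp
  · simp
  · rw [Polynomial.degree_eq_natDegree hp] at h ⊢
    have : p.natDegree < m := by exact_mod_cast h
    exact_mod_cast (by omega : p.natDegree ≤ m - 1)


end GRSAux

/-- The generalized Reed–Solomon code `C_k(A, v)` is LCD iff for all nonzero `f, g` with
`deg f < k` and `deg g < n − k`, `L(X)` does not divide `H(X)f(X) − g(X)`. -/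
theorem grs_isLCD_iff_not_dvd {K : Type*} [Field K] {n : ℕ} (a : Fin n → K)
    (ha : Function.Injective a) (v : Fin n → K) (hv : ∀ i, v i ≠ 0)
    (k : ℕ) (hk : 1 ≤ k) (hkn : k ≤ n - 1) :
    IsLCD (grsFin a v k) ↔
      ∀ f g : Polynomial K, f ≠ 0 → g ≠ 0 → f.degree < (k : WithBot ℕ) →
        g.degree < ((n - k : ℕ) : WithBot ℕ) →
        ¬ (Lpoly a ∣ Hpoly a v * f - g) := by
  have hn2 : 2 ≤ n := by omega
  have hkn' : k + 1 ≤ n := by omega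
  have hevals : ∀ g f : Polynomial K, (Lpoly a ∣ Hpoly a v * f - g) →
      ∀ i, g.eval (a i) = (Hpoly a v).eval (a i) * f.eval (a i) := by
    intro g f ⟨q, hq⟩ i
    have h1 := congrArg (Polynomial.eval (a i)) hq
    rw [Polynomial.eval_sub, Polynomial.eval_mul, Polynomial.eval_mul, Lpoly_eval,
      zero_mul, sub_eq_zero] at h1
    exact h1.symm
  constructor
  · -- LCD → conditions (contradiction)
    intro hlcd f g hf0 hg0 hfd hgd hdvd
    have heval := hevals g f hdvd
    have hxC : (fun i => v i * f.eval (a i)) ∈ grsFin a v k := mem_grsFin.2 ⟨f, hfd, fun i => rfl⟩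
    have hxD : (fun i => v i * f.eval (a i)) ∈ dualCode (grsFin a v k) := by
      intro c hc
      obtain ⟨h, hhd, hch⟩ := mem_grsFin.1 hc
      have hgh : (g * h).degree < ((n - 1 : ℕ) : WithBot ℕ) := by
        calc (g * h).degree ≤ g.degree + h.degree := Polynomial.degree_mul_le g h
          _ ≤ ((n - k - 1 : ℕ) : WithBot ℕ) + ((k - 1 : ℕ) : WithBot ℕ) :=
              add_le_add (deg_le_of_lt hgd (by omega)) (deg_le_of_lt hhd hk)
          _ = ((n - k - 1 + (k - 1) : ℕ) : WithBot ℕ) := by exact_mod_cast rfl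
          _ < ((n - 1 : ℕ) : WithBot ℕ) := by exact_mod_cast (by omega : n - k - 1 + (k-1) < n - 1)
      calc ∑ i, (v i * f.eval (a i)) * c i
          = ∑ i, (g * h).eval (a i) * ((Lipoly a i).eval (a i))⁻¹ := by
            refine Finset.sum_congr rfl fun i _ => ?_
            have hLi := Lip_eval_self_ne a ha i
            have h1 := heval i
            rw [Hpoly_eval] at h1
            have key : v i ^ 2 * f.eval (a i) = g.eval (a i) * ((Lipoly a i).eval (a i))⁻¹ := by
              rw [h1]; field_simp
            calc (v i * f.eval (a i)) * c i
                = v i ^ 2 * f.eval (a i) * h.eval (a i) := by rw [hch i]; ring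
              _ = g.eval (a i) * ((Lipoly a i).eval (a i))⁻¹ * h.eval (a i) := by rw [key]
              _ = (g * h).eval (a i) * ((Lipoly a i).eval (a i))⁻¹ := by
                  rw [Polynomial.eval_mul]; ring
        _ = (g * h).coeff (n - 1) := residue_lemma a ha _
            (lt_trans hgh (by exact_mod_cast (by omega : n - 1 < n)))
        _ = 0 := Polynomial.coeff_eq_zero_of_degree_lt hgh
    obtain ⟨i, hi⟩ : ∃ i, f.eval (a i) ≠ 0 := by
      by_contra hcon
      push_neg at hcon
      exact hf0 (eq_zero_of_evals a ha
        (lt_of_lt_of_le hfd (by exact_mod_cast (by omega : k ≤ n))) hcon)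
    have hx0 : (fun i => v i * f.eval (a i)) = (0 : Fin n → K) := by
      have := hlcd ▸ Submodule.mem_inf.2 ⟨hxC, hxD⟩
      exact (Submodule.mem_bot K).1 this
    exact mul_ne_zero (hv i) hi (congrFun hx0 i)
  · -- conditions → LCD
    intro hcond
    rw [IsLCD, Submodule.eq_bot_iff]
    intro x hx
    obtain ⟨hxC, hxD⟩ := Submodule.mem_inf.1 hx
    obtain ⟨f, hfd, hxf⟩ := mem_grsFin.1 hxC
    by_contra hxne
    have hf0 : f ≠ 0 := by
      rintro rfl
      exact hxne (funext fun i => by simp [hxf i])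
    have hmon := Lpoly_monic a
    set g := (Hpoly a v * f) %ₘ (Lpoly a) with hgdef
    have hgdeg : g.degree < (n : WithBot ℕ) := by
      rw [← Lpoly_degree a]
      exact Polynomial.degree_modByMonic_lt _ hmon
    have hdvd : Lpoly a ∣ Hpoly a v * f - g := by
      refine ⟨(Hpoly a v * f) /ₘ (Lpoly a), ?_⟩
      rw [hgdef, Polynomial.modByMonic_eq_sub_mul_div _ (Lpoly a)]
      ring
    have heval := hevals g f hdvd
    have horth : ∀ m, m < k → ∑ i, v i ^ 2 * f.eval (a i) * (a i) ^ m = 0 := by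
      intro m hm
      have hc : (fun i => v i * (Polynomial.X ^ m : Polynomial K).eval (a i)) ∈ grsFin a v k :=
        mem_grsFin.2 ⟨Polynomial.X ^ m,
          by rw [Polynomial.degree_X_pow]; exact_mod_cast hm, fun i => rfl⟩
      have h1 := hxD _ hc
      rw [← h1]
      refine Finset.sum_congr rfl fun i _ => ?_
      rw [hxf i]
      simp only [Polynomial.eval_pow, Polynomial.eval_X]
      ring
    have hg0 : g ≠ 0 := by
      intro hg
      apply hf0
      refine eq_zero_of_evals a ha
        (lt_of_lt_of_le hfd (by exact_mod_cast (by omega : k ≤ n))) fun i => ?_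
      have h1 := heval i
      rw [hg, Hpoly_eval] at h1
      simp only [Polynomial.eval_zero] at h1
      rcases mul_eq_zero.1 h1.symm with h2 | h2
      · rcases mul_eq_zero.1 h2 with h3 | h3
        · exact absurd h3 (pow_ne_zero 2 (hv i))
        · exact absurd h3 (Lip_eval_self_ne a ha i)
      · exact h2
    have hdegstep : ∀ m, m ≤ k → g.degree < ((n - m : ℕ) : WithBot ℕ) := by
      intro m
      induction m with
      | zero => intro _; simpa using hgdeg
      | succ m ih =>
        intro hm1
        have hm : m < k := hm1
        have ihm := ih (le_of_lt hm)
        have hdg := Polynomial.degree_eq_natDegree hg0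
        have hdnat : g.natDegree < n - m := by
          rw [hdg] at ihm; exact_mod_cast ihm
        have hPdeg : (g * Polynomial.X ^ m).degree < (n : WithBot ℕ) := by
          rw [Polynomial.degree_mul, Polynomial.degree_X_pow, hdg]
          exact_mod_cast (by omega : g.natDegree + m < n)
        have hres := residue_lemma a ha (g * Polynomial.X ^ m) hPdeg
        have hzero : ∑ i, (g * Polynomial.X ^ m).eval (a i) * ((Lipoly a i).eval (a i))⁻¹ = 0 := by
          rw [← horth m hm]
          refine Finset.sum_congr rfl fun i _ => ?_
          have hLi := Lip_eval_self_ne a ha i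
          rw [Polynomial.eval_mul, Polynomial.eval_pow, Polynomial.eval_X, heval i, Hpoly_eval]
          field_simp
        have hco : g.coeff (n - 1 - m) = 0 := by
          have h1 : (g * Polynomial.X ^ m).coeff (n - 1) = 0 := by rw [← hres]; exact hzero
          rwa [show n - 1 = (n - 1 - m) + m by omega, Polynomial.coeff_mul_X_pow] at h1
        by_contra hcon
        push_neg at hcon
        have hd2 : n - (m+1) ≤ g.natDegree := by
          rw [hdg] at hcon; exact_mod_cast hcon
        have hnd : g.natDegree = n - 1 - m := by omega
        exact hg0 (Polynomial.leadingCoeff_eq_zero.1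
          (by rw [Polynomial.leadingCoeff, hnd]; exact hco))
    exact hcond f g hf0 hg0 hfd (hdegstep k le_rfl) hdvd
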